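/- Let p₁ = [0:1], p₂ = [1:1], p₃ = [2:1], p₄ = [3:1], p₅ = [6:1] in ℙ¹(ℚ). Suppose h₁, h₂, h₃ ∈ PGL₂(ℚ) satisfy: h₁ exchanges p₁ with p₃ and exchanges p₄ with p₅ (i.e., h₁(p₁) = p₃, h₁(p₃) = p₁, h₁(p₄) = p₅, h₁(p₅) = p₄); h₂ exchanges p₂ with p₄ and exchanges p₃ with p₅; and h₃ exchanges p₁ with p₅ and exchanges p₂ with p₃. Then the composition h₁ ∘ h₂ ∘ h₃ equals τ, the class in PGL₂(ℚ) of the matrix with rows (3,0) and (0,1), i.e., the Möbius transformation z ↦ 3z. -/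

import Mathlib

open Matrix

noncomputable section

/-- The projective line `ℙ¹(K)` over a field `K`, as the projectivization of `K²`. -/
abbrev P1 (K : Type*) [Field K] : Type _ := Projectivization K (Fin 2 → K)

/-- `PGL₂(K)`: the quotient of `GL₂(K)` by its center. -/
abbrev PGL2 (K : Type*) [Field K] : Type _ :=
  GL (Fin 2) K ⧸ Subgroup.center (GL (Fin 2) K)

namespace PGL2

variable {K : Type*} [Field K]

/-- The linear automorphism of `K²` attached to an element of `GL₂(K)`. -/
def glEquiv (g : GL (Fin 2) K) : (Fin 2 → K) ≃ₗ[K] (Fin 2 → K) :=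
  (Matrix.GeneralLinearGroup.toLin g).toLinearEquiv

lemma glEquiv_apply (g : GL (Fin 2) K) (v : Fin 2 → K) :
    glEquiv g v = (g : Matrix (Fin 2) (Fin 2) K).mulVec v := rfl

/-- `GL₂(K)` acts on `ℙ¹(K)` by Möbius transformations. -/
instance : SMul (GL (Fin 2) K) (P1 K) :=
  ⟨fun g => Projectivization.map (glEquiv g).toLinearMap (glEquiv g).injective⟩

lemma gl_smul_mk (g : GL (Fin 2) K) (v : Fin 2 → K) (hv : v ≠ 0) :
    g • Projectivization.mk K v hv
      = Projectivization.mk K ((g : Matrix (Fin 2) (Fin 2) K).mulVec v)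
          (by have h0 := (glEquiv g).injective.ne hv
              rwa [map_zero, glEquiv_apply] at h0) :=
  Projectivization.map_mk (glEquiv g).toLinearMap (glEquiv g).injective v hv

instance : MulAction (GL (Fin 2) K) (P1 K) where
  one_smul x := by
    induction x using Projectivization.ind with
    | h v hv => rw [gl_smul_mk]; simp
  mul_smul g h x := by
    induction x using Projectivization.ind with
    | h v hv =>
      rw [gl_smul_mk, gl_smul_mk, gl_smul_mk]; congr 1; rw [Matrix.mulVec_mulVec]; rfl

lemma exists_scalar_of_mem_center (g : GL (Fin 2) K)
    (hg : g ∈ Subgroup.center (GL (Fin 2) K)) :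
    ∃ a : K, (g : Matrix (Fin 2) (Fin 2) K) = a • (1 : Matrix (Fin 2) (Fin 2) K) := by
  have hmem := Subgroup.mem_center_iff.mp hg
  set A : Matrix (Fin 2) (Fin 2) K := (g : Matrix (Fin 2) (Fin 2) K) with hA
  have hUdet : ((!![1, 1; 0, 1] : Matrix (Fin 2) (Fin 2) K)).det ≠ 0 := by
    norm_num [Matrix.det_fin_two_of]
  have hLdet : ((!![1, 0; 1, 1] : Matrix (Fin 2) (Fin 2) K)).det ≠ 0 := by
    norm_num [Matrix.det_fin_two_of]
  have hU := congrArg Units.val (hmem (Matrix.GeneralLinearGroup.mkOfDetNeZero _ hUdet))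
  have hL := congrArg Units.val (hmem (Matrix.GeneralLinearGroup.mkOfDetNeZero _ hLdet))
  have hU' : (!![1, 1; 0, 1] : Matrix (Fin 2) (Fin 2) K) * A = A * !![1, 1; 0, 1] := hU
  have hL' : (!![1, 0; 1, 1] : Matrix (Fin 2) (Fin 2) K) * A = A * !![1, 0; 1, 1] := hL
  have e1 := congrFun (congrFun hU' 0) 0
  have e2 := congrFun (congrFun hU' 0) 1
  have e3 := congrFun (congrFun hL' 0) 0
  simp [Matrix.mul_apply, Fin.sum_univ_two] at e1 e2 e3
  refine ⟨A 0 0, ?_⟩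
  ext i j
  fin_cases i <;> fin_cases j <;>
    simp [Matrix.one_apply] <;> first | exact e3 | exact e1 | linear_combination e2



lemma center_smul_eq (g : GL (Fin 2) K) (hg : g ∈ Subgroup.center (GL (Fin 2) K))
    (x : P1 K) : g • x = x := by
  obtain ⟨a, hA⟩ := exists_scalar_of_mem_center g hg
  have ha : a ≠ 0 := by
    intro h
    subst h
    have : IsUnit (g : Matrix (Fin 2) (Fin 2) K).det := ⟨Matrix.GeneralLinearGroup.det g, rfl⟩
    rw [hA] at this
    simp at this
  induction x using Projectivization.ind with
  | h v hv =>
    rw [gl_smul_mk]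
    rw [Projectivization.mk_eq_mk_iff]
    exact ⟨Units.mk0 a ha, by
      ext i; fin_cases i <;> simp [hA, Matrix.mulVec, dotProduct, Fin.sum_univ_two, Units.smul_def]⟩

/-- `PGL₂(K)` acts on `ℙ¹(K)` by Möbius transformations. -/
def toPerm : PGL2 K →* Equiv.Perm (P1 K) :=
  QuotientGroup.lift _ (MulAction.toPermHom (GL (Fin 2) K) (P1 K))
    (fun g hg => Equiv.ext fun x => center_smul_eq g hg x)

instance : SMul (PGL2 K) (P1 K) := ⟨fun g x => toPerm g x⟩

lemma smul_def (g : PGL2 K) (x : P1 K) : g • x = toPerm g x := rfl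

instance : MulAction (PGL2 K) (P1 K) where
  one_smul x := by simp [smul_def]
  mul_smul g h x := by simp [smul_def]

/-- The class in `PGL₂(K)` of a matrix with nonzero determinant. -/
def cls (M : Matrix (Fin 2) (Fin 2) K) (h : M.det ≠ 0) : PGL2 K :=
  QuotientGroup.mk (Matrix.GeneralLinearGroup.mkOfDetNeZero M h)

lemma cls_smul_mk (M : Matrix (Fin 2) (Fin 2) K) (h : M.det ≠ 0) (v : Fin 2 → K)
    (hv : v ≠ 0) (hMv : M.mulVec v ≠ 0) :
    cls M h • Projectivization.mk K v hv = Projectivization.mk K (M.mulVec v) hMv := by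
  rw [smul_def, cls]
  show (Matrix.GeneralLinearGroup.mkOfDetNeZero M h) • Projectivization.mk K v hv = _
  rw [gl_smul_mk]
  rfl

lemma vec_ne_zero (a : K) : ![a, (1 : K)] ≠ 0 := fun h => by simpa using congrFun h 1

/-- The affine point `[z : 1]` of `ℙ¹(K)`. -/
def affPt (z : K) : P1 K := Projectivization.mk K ![z, 1] (vec_ne_zero z)

/-- The point `[a : b]` of `ℙ¹(K)`. -/
def pt (a b : K) (h : ![a, b] ≠ 0) : P1 K := Projectivization.mk K ![a, b] h

end PGL2

/-!
Composed with `τ⁻¹`, the product `h₁ h₂ h₃` fixes `0`, `1` and `2`: following the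
exchanges, `0 ↦ 6 ↦ 2 ↦ 0`, `1 ↦ 2 ↦ 6 ↦ 3` and `2 ↦ 1 ↦ 3 ↦ 6`. An element of `PGL₂(K)`
fixing three points is trivial, because the fixed points `[z : 1]` of the class of
`!![a, b; c, d]` are the roots of `c z² + (d - a) z - b`, which vanishes identically only for
a scalar matrix.
-/

lemma eq_zero_of_three_roots_quadratic {K : Type*} [Field K] {p q r a b c : K} (hab : a ≠ b)
    (hac : a ≠ c) (hbc : b ≠ c) (ha : p * a ^ 2 + q * a + r = 0) (hb : p * b ^ 2 + q * b + r = 0)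
    (hc : p * c ^ 2 + q * c + r = 0) : p = 0 ∧ q = 0 ∧ r = 0 := by
  have hab' : p * (a + b) + q = 0 := by
    refine (mul_eq_zero.mp ?_).resolve_left (sub_ne_zero.mpr hab)
    linear_combination ha - hb
  have hac' : p * (a + c) + q = 0 := by
    refine (mul_eq_zero.mp ?_).resolve_left (sub_ne_zero.mpr hac)
    linear_combination ha - hc
  have hp : p = 0 := by
    refine (mul_eq_zero.mp ?_).resolve_left (sub_ne_zero.mpr hbc)
    linear_combination hab' - hac'
  have hq : q = 0 := by linear_combination hab' - (a + b) * hp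
  exact ⟨hp, hq, by linear_combination ha - a ^ 2 * hp - a * hq⟩

namespace PGL2

variable {K : Type*} [Field K]

lemma gl_smul_affPt_eq_affPt_iff (G : GL (Fin 2) K) (z w : K) :
    G • affPt z = affPt w ↔
      G.val 1 0 * z + G.val 1 1 ≠ 0 ∧
        G.val 0 0 * z + G.val 0 1 = w * (G.val 1 0 * z + G.val 1 1) := by
  rw [affPt, gl_smul_mk, affPt, Projectivization.mk_eq_mk_iff]
  constructor
  · rintro ⟨u, hu⟩
    have h0 := congrFun hu 0
    have h1 := congrFun hu 1
    simp only [Fin.isValue, Pi.smul_apply, cons_val_zero, Units.smul_def, smul_eq_mul, mulVec,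
      dotProduct, Fin.sum_univ_two, cons_val_one, cons_val_fin_one, mul_one] at h0 h1
    refine ⟨h1 ▸ u.ne_zero, ?_⟩
    rw [← h0, ← h1, mul_comm]
  · rintro ⟨hne, heq⟩
    refine ⟨Units.mk0 _ hne, ?_⟩
    ext i
    fin_cases i
    · simp only [Fin.isValue, Fin.zero_eta, Pi.smul_apply, cons_val_zero, Units.smul_def,
        Units.val_mk0, smul_eq_mul, mulVec, dotProduct, Fin.sum_univ_two, cons_val_one,
        cons_val_fin_one, mul_one]
      linear_combination -heq
    · simp [Units.smul_def, Matrix.mulVec, dotProduct, Fin.sum_univ_two]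

lemma eq_one_of_smul_affPt_eq_self (g : PGL2 K) {a b c : K} (hab : a ≠ b) (hac : a ≠ c)
    (hbc : b ≠ c) (ha : g • affPt a = affPt a) (hb : g • affPt b = affPt b)
    (hc : g • affPt c = affPt c) : g = 1 := by
  obtain ⟨G, rfl⟩ := QuotientGroup.mk_surjective g
  have root : ∀ z : K, (QuotientGroup.mk G : PGL2 K) • affPt z = affPt z →
      G.val 1 0 * z ^ 2 + (G.val 1 1 - G.val 0 0) * z + -G.val 0 1 = 0 := fun z hz => by
    linear_combination -((gl_smul_affPt_eq_affPt_iff G z z).mp hz).2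
  obtain ⟨h10, hdiag, h01⟩ :=
    eq_zero_of_three_roots_quadratic hab hac hbc (root a ha) (root b hb) (root c hc)
  rw [QuotientGroup.eq_one_iff, Matrix.GeneralLinearGroup.mem_center_iff_val_mem_range_scalar]
  refine ⟨G.val 0 0, ?_⟩
  ext i j
  fin_cases i <;> fin_cases j <;> simp [neg_eq_zero.mp h01, h10, (sub_eq_zero.mp hdiag).symm]

lemma eq_of_smul_affPt_eq (g g' : PGL2 K) {a b c : K} (hab : a ≠ b) (hac : a ≠ c)
    (hbc : b ≠ c) (ha : g • affPt a = g' • affPt a) (hb : g • affPt b = g' • affPt b)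
    (hc : g • affPt c = g' • affPt c) : g = g' := by
  rw [← inv_mul_eq_one]
  apply eq_one_of_smul_affPt_eq_self _ hab hac hbc <;> rwa [mul_smul, inv_smul_eq_iff, eq_comm]

lemma cls_scaling_smul_affPt (c : K) (h : (!![c, 0; 0, 1] : Matrix (Fin 2) (Fin 2) K).det ≠ 0)
    (z : K) : cls !![c, 0; 0, 1] h • affPt z = affPt (c * z) :=
  (gl_smul_affPt_eq_affPt_iff _ z _).mpr (by simp)

end PGL2

open PGL2 in
/-- With `p₁ = 0`, `p₂ = 1`, `p₃ = 2`, `p₄ = 3`, `p₅ = 6` on `ℙ¹(ℚ)`, if `h₁` exchanges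
`p₁ ↔ p₃` and `p₄ ↔ p₅`, `h₂` exchanges `p₂ ↔ p₄` and `p₃ ↔ p₅`, and `h₃` exchanges
`p₁ ↔ p₅` and `p₂ ↔ p₃`, then `h₁ h₂ h₃` is the Möbius transformation `z ↦ 3z`. -/
theorem composition_of_involutions_eq_tau (h₁ h₂ h₃ : PGL2 ℚ)
    (h₁b : h₁ • affPt (2 : ℚ) = affPt 0)
    (h₁c : h₁ • affPt (3 : ℚ) = affPt 6) (h₁d : h₁ • affPt (6 : ℚ) = affPt 3)
    (h₂a : h₂ • affPt (1 : ℚ) = affPt 3)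
    (h₂c : h₂ • affPt (2 : ℚ) = affPt 6) (h₂d : h₂ • affPt (6 : ℚ) = affPt 2)
    (h₃a : h₃ • affPt (0 : ℚ) = affPt 6)
    (h₃c : h₃ • affPt (1 : ℚ) = affPt 2) (h₃d : h₃ • affPt (2 : ℚ) = affPt 1) :
    h₁ * h₂ * h₃ = cls !![(3 : ℚ), 0; 0, 1] (by norm_num [Matrix.det_fin_two_of]) := by
  apply eq_of_smul_affPt_eq _ _ (zero_ne_one : (0 : ℚ) ≠ 1) two_ne_zero.symm (by norm_num) <;>
    simp only [mul_smul, cls_scaling_smul_affPt]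
  · rw [h₃a, h₂d, h₁b, mul_zero]
  · rw [h₃c, h₂c, h₁d, mul_one]
  · rw [h₃d, h₂a, h₁c]; norm_num
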